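/- Every pseudo-complete ℤ-invariant valued abelian group (G, v) satisfies property (M): for every integer m > 0 and every x ∈ G there exists y ∈ G with x − y ∈ mG and V_x^m = {z ∈ G : v(z) > v(y)}. -/

import Mathlib

/-!
If `v (x + m • g)` had no largest value as `g` ranges over `G`, pick a well-ordered cofinal
family of these values, `v (x + m • b i)`. By `ℤ`-invariance `v (b i - b j) = v (x + m • b i)`
for `i < j`, so `b` is pseudo-Cauchy; for a pseudo-limit `ℓ` of it the value of `x + m • ℓ`
dominates the whole family, a contradiction. For `y = x + m • g` of largest value, `V_x^m` is
exactly the set of elements of value above `v y`.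
-/

universe u

/-- `v : G → Γ` is a valuation making the abelian group `G` a valued abelian group:
`Γ` is a linear order with greatest element `⊤` (denoted `∞` in the paper), `v` is
surjective, `v g = ⊤` iff `g = 0`, and `v (g - h) ≥ min (v g) (v h)`. -/
structure IsValuedGroup {G Γ : Type*} [AddCommGroup G] [LinearOrder Γ] [OrderTop Γ]
    (v : G → Γ) : Prop where
  surjective : Function.Surjective v
  eq_top_iff : ∀ g : G, v g = ⊤ ↔ g = 0
  min_le_sub : ∀ g h : G, min (v g) (v h) ≤ v (g - h)

/-- A sequence `a` indexed by a linearly ordered set `I` is pseudo-Cauchy if eventually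
`v (a i - a j) < v (a j - a k)` for `i < j < k`. -/
def IsPseudoCauchy {G Γ I : Type*} [AddCommGroup G] [LinearOrder Γ] [LinearOrder I]
    (v : G → Γ) (a : I → G) : Prop :=
  ∃ i₀ : I, ∀ i j k : I, i₀ ≤ i → i < j → j < k → v (a i - a j) < v (a j - a k)

/-- `x` is a pseudo-limit of the sequence `a` if eventually
`v (a i - x) = v (a i - a j)` for `i < j`. -/
def IsPseudoLimit {G Γ I : Type*} [AddCommGroup G] [LinearOrder Γ] [LinearOrder I]
    (v : G → Γ) (a : I → G) (x : G) : Prop :=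
  ∃ i₀ : I, ∀ i j : I, i₀ ≤ i → i < j → v (a i - x) = v (a i - a j)

/-- For a valued abelian group `(G, v)`, `m ∈ ℕ` and `a ∈ G`, the set
`V_a^m = {x ∈ G : v (a + m • g) < v x for all g ∈ G}`, i.e. the largest convex subgroup
of `G` not meeting `a + mG` (and `∅` if `a ∈ mG`). -/
def Vm {G Γ : Type*} [AddCommGroup G] [LinearOrder Γ] (v : G → Γ) (m : ℕ) (a : G) :
    Set G :=
  {x : G | ∀ g : G, v (a + m • g) < v x}

/-- A valued abelian group is pseudo-complete if every pseudo-Cauchy sequence in it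
admits a pseudo-limit in it. -/
def IsPseudoComplete {G Γ : Type u} [AddCommGroup G] [LinearOrder Γ] (v : G → Γ) : Prop :=
  ∀ (I : Type u) [LinearOrder I] [WellFoundedLT I] [NoMaxOrder I] [Nonempty I]
    (a : I → G), IsPseudoCauchy v a → ∃ x : G, IsPseudoLimit v a x

theorem exists_isCofinal_wellFoundedLT (α : Type*) [LinearOrder α] :
    ∃ s : Set α, IsCofinal s ∧ WellFoundedLT s := by
  refine ⟨_, isCofinal_setOfPred_imp_lt WellOrderingRel, ⟨?_⟩⟩
  refine Subrelation.wf (r := InvImage WellOrderingRel Subtype.val) (fun {a b} hab ↦ ?_)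
    (InvImage.wf _ WellOrderingRel.isWellOrder.wf)
  rcases trichotomous_of WellOrderingRel a.1 b.1 with h | h | h
  · exact h
  · exact absurd (Subtype.ext h) hab.ne
  · exact absurd (a.2 b.1 h) (not_lt.2 hab.le)

namespace IsValuedGroup

variable {G Γ : Type*} [AddCommGroup G] [LinearOrder Γ] [OrderTop Γ] {v : G → Γ}

theorem map_zero (hv : IsValuedGroup v) : v 0 = ⊤ :=
  (hv.eq_top_iff 0).2 rfl

theorem map_neg (hv : IsValuedGroup v) (g : G) : v (-g) = v g := by
  have key : ∀ g : G, v g ≤ v (-g) := fun g ↦ by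
    simpa [hv.map_zero] using hv.min_le_sub 0 g
  exact le_antisymm (by simpa using key (-g)) (key g)

theorem map_sub_comm (hv : IsValuedGroup v) (g h : G) : v (g - h) = v (h - g) := by
  rw [← hv.map_neg, neg_sub]

theorem min_le_add (hv : IsValuedGroup v) (g h : G) : min (v g) (v h) ≤ v (g + h) := by
  simpa [hv.map_neg] using hv.min_le_sub g (-h)

theorem map_sub_of_lt (hv : IsValuedGroup v) {g h : G} (hgh : v g < v h) :
    v (g - h) = v g := by
  refine le_antisymm ?_ (min_eq_left hgh.le ▸ hv.min_le_sub g h)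
  by_contra! hc
  have := hv.min_le_add (g - h) h
  rw [sub_add_cancel] at this
  exact this.not_gt (lt_min hc hgh)

end IsValuedGroup

section ValuationPreservingEndomorphism

variable {G Γ : Type*} [AddCommGroup G] [LinearOrder Γ] [OrderTop Γ] {v : G → Γ}
  {φ : G →+ G} {I : Type*} [LinearOrder I] {b : I → G} {x : G}

theorem map_sub_eq_of_strictMono_map_add (hv : IsValuedGroup v) (hφ : ∀ g, v (φ g) = v g)
    (hb : StrictMono fun i ↦ v (x + φ (b i))) {i j : I} (hij : i < j) :
    v (b i - b j) = v (x + φ (b i)) := by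
  rw [← hφ, map_sub, ← hv.map_sub_of_lt (hb hij)]
  congr 1
  abel

theorem isPseudoCauchy_of_strictMono_map_add [Nonempty I] (hv : IsValuedGroup v)
    (hφ : ∀ g, v (φ g) = v g) (hb : StrictMono fun i ↦ v (x + φ (b i))) :
    IsPseudoCauchy v b := by
  refine ⟨Classical.arbitrary I, fun i j k _ hij hjk ↦ ?_⟩
  rw [map_sub_eq_of_strictMono_map_add hv hφ hb hij,
    map_sub_eq_of_strictMono_map_add hv hφ hb hjk]
  exact hb hij

theorem exists_forall_ge_map_add_le_of_isPseudoLimit [NoMaxOrder I] (hv : IsValuedGroup v)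
    (hφ : ∀ g, v (φ g) = v g) (hb : StrictMono fun i ↦ v (x + φ (b i))) {ℓ : G}
    (hℓ : IsPseudoLimit v b ℓ) :
    ∃ i₀, ∀ i, i₀ ≤ i → v (x + φ (b i)) ≤ v (x + φ ℓ) := by
  obtain ⟨i₀, hi₀⟩ := hℓ
  refine ⟨i₀, fun i hi ↦ ?_⟩
  obtain ⟨j, hij⟩ := exists_gt i
  have hdist : v (x + φ ℓ - (x + φ (b i))) = v (x + φ (b i)) := by
    rw [add_sub_add_left_eq_sub, ← map_sub, hφ, hv.map_sub_comm, hi₀ i j hi hij,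
      map_sub_eq_of_strictMono_map_add hv hφ hb hij]
  have := hv.min_le_add (x + φ ℓ - (x + φ (b i))) (x + φ (b i))
  rwa [hdist, min_self, sub_add_cancel] at this

end ValuationPreservingEndomorphism

theorem exists_max_map_add_of_isPseudoComplete {G Γ : Type u} [AddCommGroup G] [LinearOrder Γ]
    [OrderTop Γ] {v : G → Γ} (hv : IsValuedGroup v) (hpc : IsPseudoComplete v) {φ : G →+ G}
    (hφ : ∀ g, v (φ g) = v g) (x : G) : ∃ g, ∀ g', v (x + φ g') ≤ v (x + φ g) := by
  by_contra! hno
  let S := Set.range fun g ↦ v (x + φ g)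
  obtain ⟨C, hC, hCwf⟩ := exists_isCofinal_wellFoundedLT S
  have hcof : ∀ g, ∃ c : C, v (x + φ g) ≤ c.1 := fun g ↦
    let ⟨c, hc, hle⟩ := hC ⟨_, g, rfl⟩
    ⟨⟨c, hc⟩, hle⟩
  choose b hb using fun c : C ↦ show ∃ g, v (x + φ g) = c.1.1 from c.1.2
  have : Nonempty C := ⟨(hcof 0).choose⟩
  have : NoMaxOrder C := ⟨fun c ↦
    let ⟨g', hg'⟩ := hno (b c)
    let ⟨d, hd⟩ := hcof g'
    ⟨d, show c.1.1 < d.1.1 from hb c ▸ hg'.trans_le hd⟩⟩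
  have hmono : StrictMono fun c ↦ v (x + φ (b c)) := fun c d hcd ↦ by
    simp only [hb]
    exact hcd
  obtain ⟨ℓ, hℓ⟩ := hpc C b (isPseudoCauchy_of_strictMono_map_add hv hφ hmono)
  obtain ⟨c₀, hc₀⟩ := exists_forall_ge_map_add_le_of_isPseudoLimit hv hφ hmono hℓ
  obtain ⟨g', hg'⟩ := hno ℓ
  obtain ⟨c, hc⟩ := hcof g'
  have hbound := hc₀ (max c c₀) (le_max_right _ _)
  rw [← hb] at hc
  exact hg'.not_ge (hc.trans ((hmono.monotone (le_max_left c c₀)).trans hbound))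

/-- Every pseudo-complete ℤ-invariant valued abelian group `(G, v)`
satisfies property (M): for every integer `m > 0` and every `x ∈ G` there exists `y ∈ G`
with `x - y ∈ mG` and `V_x^m = {z ∈ G : v z > v y}`. -/
theorem propertyM_of_pseudoComplete {G Γ : Type u} [AddCommGroup G] [LinearOrder Γ]
    [OrderTop Γ] (v : G → Γ) (hv : IsValuedGroup v)
    (hinv : ∀ (g : G) (n : ℕ), 0 < n → v (n • g) = v g)
    (hpc : IsPseudoComplete v) :
    ∀ m : ℕ, 0 < m → ∀ x : G, ∃ y : G,
      (∃ w : G, x - y = m • w) ∧ Vm v m x = {z : G | v y < v z} := by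
  intro m hm x
  obtain ⟨g, hg⟩ := exists_max_map_add_of_isPseudoComplete hv hpc
    (φ := nsmulAddMonoidHom m) (fun g ↦ hinv g m hm) x
  refine ⟨x + m • g, ⟨-g, by simp⟩, Set.ext fun z ↦ ⟨fun hz ↦ hz g, fun hz g' ↦ ?_⟩⟩
  exact (hg g').trans_lt hz
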